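/- arXiv:math/9903116 — 2 statements merged into one kernel-verified Lean document; each statement's English description precedes it below -/
import Mathlib

section
/- Let (J,<_J) be a linear order of size λ (λ infinite regular, not the successor of a singular cardinal) with no increasing or decreasing chain of length λ. Then every ultrafilter on the interval algebra Int(L(J)) has a generating set of size less than λ, i.e., χ⁺(Int(L(J))) ≤ λ. -/
open Cardinal Set

/-- The interval algebra of a linear order `L`: the Boolean subalgebra of `𝒫(L)`
generated by the half-open intervals `[a,b)`. -/
inductive InIntervalAlgebra (L : Type*) [LinearOrder L] : Set L → Prop
  | ico (a b : L) : InIntervalAlgebra L (Set.Ico a b)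
  | empty : InIntervalAlgebra L ∅
  | compl {s : Set L} : InIntervalAlgebra L s → InIntervalAlgebra L sᶜ
  | union {s t : Set L} : InIntervalAlgebra L s → InIntervalAlgebra L t →
      InIntervalAlgebra L (s ∪ t)

/-- `U` is an ultrafilter on the set algebra `A ⊆ 𝒫(L)`. -/
def IsUltrafilterOn {L : Type*} (A U : Set (Set L)) : Prop :=
  U ⊆ A ∧ ∅ ∉ U ∧ (∀ s ∈ U, ∀ t ∈ A, s ⊆ t → t ∈ U) ∧
    (∀ s ∈ U, ∀ t ∈ U, s ∩ t ∈ U) ∧ (∀ s ∈ A, s ∈ U ∨ sᶜ ∈ U)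

/-- `G` generates the ultrafilter `U`: every member of `U` contains a finite
intersection of members of `G`. -/
def GeneratesUF {L : Type*} (G U : Set (Set L)) : Prop :=
  G ⊆ U ∧ ∀ s ∈ U, ∃ F : Finset (Set L), ↑F ⊆ G ∧ ⋂₀ (↑F : Set (Set L)) ⊆ s

def FinUnionIco (K : Type*) [LinearOrder K] (s : Set K) : Prop :=
  ∃ F : Finset (K × K), s = ⋃ p ∈ F, Set.Ico p.1 p.2

section FU

variable {K : Type*} [LinearOrder K]

lemma FU_empty : FinUnionIco K ∅ := ⟨∅, by simp⟩

lemma FU_ico (a b : K) : FinUnionIco K (Set.Ico a b) := ⟨{(a, b)}, by simp⟩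

lemma FU_union {s t : Set K} (hs : FinUnionIco K s) (ht : FinUnionIco K t) :
    FinUnionIco K (s ∪ t) := by
  obtain ⟨F, rfl⟩ := hs; obtain ⟨G, rfl⟩ := ht
  exact ⟨F ∪ G, by rw [Finset.set_biUnion_union]⟩

lemma FU_inter_Ico {s : Set K} (hs : FinUnionIco K s) (a b : K) :
    FinUnionIco K (s ∩ Set.Ico a b) := by
  obtain ⟨F, rfl⟩ := hs
  refine ⟨F.image (fun p => (p.1 ⊔ a, p.2 ⊓ b)), ?_⟩
  rw [Finset.set_biUnion_finset_image, Set.iUnion₂_inter]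
  exact Set.iUnion₂_congr (fun p _ => Set.Ico_inter_Ico)

lemma Ico_diff_Ico' (c d a b : K) :
    Set.Ico c d \ Set.Ico a b = Set.Ico c (d ⊓ a) ∪ Set.Ico (c ⊔ b) d := by
  ext x
  simp only [Set.mem_diff, Set.mem_Ico, Set.mem_union, lt_inf_iff, sup_le_iff, not_and, not_lt]
  constructor
  · rintro ⟨⟨h1, h2⟩, h3⟩
    rcases lt_or_ge x a with h | h
    · exact Or.inl ⟨h1, h2, h⟩
    · exact Or.inr ⟨⟨h1, h3 h⟩, h2⟩
  · rintro (⟨h1, h2, h3⟩ | ⟨⟨h1, h2⟩, h3⟩)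
    · exact ⟨⟨h1, h2⟩, fun h => absurd h3 (not_lt.mpr h)⟩
    · exact ⟨⟨h1, h3⟩, fun _ => h2⟩

lemma FU_diff_Ico {s : Set K} (hs : FinUnionIco K s) (a b : K) :
    FinUnionIco K (s \ Set.Ico a b) := by
  obtain ⟨F, rfl⟩ := hs
  rw [show (⋃ p ∈ F, Set.Ico p.1 p.2) \ Set.Ico a b
      = ⋃ p ∈ F, (Set.Ico p.1 p.2 \ Set.Ico a b) by simp only [Set.iUnion_diff]]
  classical
  induction F using Finset.induction with
  | empty => simpa using FU_empty
  | @insert q G hq ih =>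
    rw [Finset.set_biUnion_insert]
    refine FU_union ?_ ih
    rw [Ico_diff_Ico']
    exact FU_union (FU_ico _ _) (FU_ico _ _)

lemma FU_inter {s t : Set K} (hs : FinUnionIco K s) (ht : FinUnionIco K t) :
    FinUnionIco K (s ∩ t) := by
  obtain ⟨G, rfl⟩ := ht
  classical
  induction G using Finset.induction with
  | empty => simpa using FU_empty
  | @insert q G hq ih =>
    rw [Finset.set_biUnion_insert, Set.inter_union_distrib_left]
    exact FU_union (FU_inter_Ico hs q.1 q.2) ih

lemma FU_diff {s t : Set K} (hs : FinUnionIco K s) (ht : FinUnionIco K t) :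
    FinUnionIco K (s \ t) := by
  obtain ⟨G, rfl⟩ := ht
  classical
  induction G using Finset.induction generalizing s with
  | empty => simpa using hs
  | @insert q G hq ih =>
    rw [Finset.set_biUnion_insert, ← Set.diff_diff]
    exact ih (FU_diff_Ico hs q.1 q.2)

lemma algebra_FU {s : Set K} (h : InIntervalAlgebra K s) :
    FinUnionIco K s ∨ FinUnionIco K sᶜ := by
  induction h with
  | ico a b => exact Or.inl (FU_ico a b)
  | empty => exact Or.inl FU_empty
  | @compl s _ ih => rw [compl_compl]; exact ih.symm
  | @union s t _ _ ih1 ih2 =>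
    rcases ih1 with h1 | h1 <;> rcases ih2 with h2 | h2
    · exact Or.inl (FU_union h1 h2)
    · refine Or.inr ?_
      rw [Set.compl_union, Set.inter_comm, ← Set.diff_eq]
      exact FU_diff h2 h1
    · refine Or.inr ?_
      rw [Set.compl_union, ← Set.diff_eq]
      exact FU_diff h1 h2
    · refine Or.inr ?_
      rw [Set.compl_union]
      exact FU_inter h1 h2

lemma uf_no_cover {A U : Set (Set K)} (hU : IsUltrafilterOn A U)
    (hA : ∀ a b : K, Set.Ico a b ∈ A) (F : Finset (K × K))
    (hF : ∀ p ∈ F, Set.Ico p.1 p.2 ∉ U) :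
    ∀ w ∈ U, w ⊆ (⋃ p ∈ F, Set.Ico p.1 p.2) → False := by
  classical
  induction F using Finset.induction with
  | empty =>
    intro w hw hsub
    simp only [Finset.notMem_empty, Set.iUnion_of_empty, Set.iUnion_empty,
      Set.subset_empty_iff] at hsub
    exact hU.2.1 (hsub ▸ hw)
  | @insert q G hq ih =>
    intro w hw hsub
    have hqU : (Set.Ico q.1 q.2)ᶜ ∈ U :=
      (hU.2.2.2.2 _ (hA q.1 q.2)).resolve_left (hF q (Finset.mem_insert_self q G))
    refine ih (fun p hp => hF p (Finset.mem_insert_of_mem hp)) (w ∩ (Set.Ico q.1 q.2)ᶜ)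
      (hU.2.2.2.1 _ hw _ hqU) ?_
    intro x hx
    have := hsub hx.1
    rw [Finset.set_biUnion_insert] at this
    exact this.resolve_left hx.2

lemma uf_exists_Ico {A U : Set (Set K)} (hU : IsUltrafilterOn A U)
    (hA : ∀ a b : K, Set.Ico a b ∈ A) {w : Set K} (hw : w ∈ U)
    (hFU : FinUnionIco K w) :
    ∃ a b : K, Set.Ico a b ∈ U ∧ Set.Ico a b ⊆ w := by
  obtain ⟨F, rfl⟩ := hFU
  by_contra hcon
  push_neg at hcon
  refine uf_no_cover hU hA F (fun p hp hmem => ?_) _ hw subset_rfl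
  exact hcon p.1 p.2 hmem (fun x hx => Set.mem_iUnion₂.mpr ⟨p, hp, hx⟩)

end FU


lemma exists_small_cofinal {K : Type 1} [LinearOrder K] {lam : Cardinal.{0}}
    (hinf : ℵ₀ ≤ lam)
    (hchain : ¬ ∃ f : Ordinal → K, ∀ α β, α < β → β < lam.ord → f α < f β)
    (P : Set K) :
    ∃ C : Set K, C ⊆ P ∧ #C < Cardinal.lift.{1} lam ∧ ∀ p ∈ P, ∃ c ∈ C, p ≤ c := by
  by_contra hcon
  push_neg at hcon
  have key : ∀ s : Set K, s ⊆ P → #s < Cardinal.lift.{1} lam →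
      ∃ p : ↥P, ∀ c ∈ s, c < (p : K) := by
    intro s hs hc
    obtain ⟨p, hp, h⟩ := hcon s hs hc
    exact ⟨⟨p, hp⟩, fun c hc' => h c hc'⟩
  have hzero : (0 : Cardinal.{1}) < Cardinal.lift.{1} lam := by
    have : (0 : Cardinal.{0}) < lam := lt_of_lt_of_le aleph0_pos hinf
    simpa using Cardinal.lift_lt.{0,1}.mpr this
  have hPne : Nonempty ↥P := by
    obtain ⟨p, hp⟩ := key ∅ (Set.empty_subset P) (by simpa using hzero)
    exact ⟨p⟩
  classical
  have hsub : ∀ (γ : Ordinal.{0}) (IH : ∀ δ, δ < γ → ↥P),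
      (Set.range fun δ' : Set.Iio γ => ((IH δ'.1 δ'.2 : ↥P) : K)) ⊆ P := by
    rintro γ IH _ ⟨δ, rfl⟩; exact (IH δ.1 δ.2).2
  have hcard : ∀ (γ : Ordinal.{0}), γ < lam.ord → ∀ (IH : ∀ δ, δ < γ → ↥P),
      #(Set.range fun δ' : Set.Iio γ => ((IH δ'.1 δ'.2 : ↥P) : K)) < Cardinal.lift.{1} lam := by
    intro γ hγ IH
    refine lt_of_le_of_lt Cardinal.mk_range_le ?_
    rw [Ordinal.mk_Iio_ordinal]
    exact Cardinal.lift_lt.mpr (Cardinal.lt_ord.mp hγ)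
  let F : ∀ γ : Ordinal.{0}, (∀ δ, δ < γ → ↥P) → ↥P := fun γ IH =>
    if hγ : γ < lam.ord then (key _ (hsub γ IH) (hcard γ hγ IH)).choose
    else Classical.arbitrary ↥P
  let g : Ordinal.{0} → ↥P := WellFounded.fix Ordinal.lt_wf F
  have hg : ∀ γ, g γ = F γ (fun δ _ => g δ) := fun γ =>
    WellFounded.fix_eq Ordinal.lt_wf F γ
  have hmono : ∀ δ γ : Ordinal.{0}, δ < γ → γ < lam.ord → (g δ : K) < (g γ : K) := by
    intro δ γ hδγ hγ
    rw [hg γ]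
    show (g δ : K) < (F γ (fun δ _ => g δ) : K)
    have heq : F γ (fun δ _ => g δ)
        = (key _ (hsub γ (fun δ _ => g δ)) (hcard γ hγ (fun δ _ => g δ))).choose :=
      dif_pos hγ
    rw [heq]
    exact (key _ (hsub γ (fun δ _ => g δ)) (hcard γ hγ (fun δ _ => g δ))).choose_spec
      _ ⟨⟨δ, hδγ⟩, rfl⟩
  exact hchain ⟨fun γ => (g γ : K), fun α β hαβ hβ => hmono α β hαβ hβ⟩

lemma exists_small_coinitial {K : Type 1} [LinearOrder K] {lam : Cardinal.{0}}
    (hinf : ℵ₀ ≤ lam)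
    (hchain : ¬ ∃ f : Ordinal → K, ∀ α β, α < β → β < lam.ord → f β < f α)
    (P : Set K) :
    ∃ C : Set K, C ⊆ P ∧ #C < Cardinal.lift.{1} lam ∧ ∀ p ∈ P, ∃ c ∈ C, c ≤ p := by
  by_contra hcon
  push_neg at hcon
  have key : ∀ s : Set K, s ⊆ P → #s < Cardinal.lift.{1} lam →
      ∃ p : ↥P, ∀ c ∈ s, (p : K) < c := by
    intro s hs hc
    obtain ⟨p, hp, h⟩ := hcon s hs hc
    exact ⟨⟨p, hp⟩, fun c hc' => h c hc'⟩
  have hzero : (0 : Cardinal.{1}) < Cardinal.lift.{1} lam := by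
    have : (0 : Cardinal.{0}) < lam := lt_of_lt_of_le aleph0_pos hinf
    simpa using Cardinal.lift_lt.{0,1}.mpr this
  have hPne : Nonempty ↥P := by
    obtain ⟨p, hp⟩ := key ∅ (Set.empty_subset P) (by simpa using hzero)
    exact ⟨p⟩
  classical
  have hsub : ∀ (γ : Ordinal.{0}) (IH : ∀ δ, δ < γ → ↥P),
      (Set.range fun δ' : Set.Iio γ => ((IH δ'.1 δ'.2 : ↥P) : K)) ⊆ P := by
    rintro γ IH _ ⟨δ, rfl⟩; exact (IH δ.1 δ.2).2
  have hcard : ∀ (γ : Ordinal.{0}), γ < lam.ord → ∀ (IH : ∀ δ, δ < γ → ↥P),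
      #(Set.range fun δ' : Set.Iio γ => ((IH δ'.1 δ'.2 : ↥P) : K)) < Cardinal.lift.{1} lam := by
    intro γ hγ IH
    refine lt_of_le_of_lt Cardinal.mk_range_le ?_
    rw [Ordinal.mk_Iio_ordinal]
    exact Cardinal.lift_lt.mpr (Cardinal.lt_ord.mp hγ)
  let F : ∀ γ : Ordinal.{0}, (∀ δ, δ < γ → ↥P) → ↥P := fun γ IH =>
    if hγ : γ < lam.ord then (key _ (hsub γ IH) (hcard γ hγ IH)).choose
    else Classical.arbitrary ↥P
  let g : Ordinal.{0} → ↥P := WellFounded.fix Ordinal.lt_wf F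
  have hg : ∀ γ, g γ = F γ (fun δ _ => g δ) := fun γ =>
    WellFounded.fix_eq Ordinal.lt_wf F γ
  have hmono : ∀ δ γ : Ordinal.{0}, δ < γ → γ < lam.ord → (g γ : K) < (g δ : K) := by
    intro δ γ hδγ hγ
    rw [hg γ]
    show (F γ (fun δ _ => g δ) : K) < (g δ : K)
    have heq : F γ (fun δ _ => g δ)
        = (key _ (hsub γ (fun δ _ => g δ)) (hcard γ hγ (fun δ _ => g δ))).choose :=
      dif_pos hγ
    rw [heq]
    exact (key _ (hsub γ (fun δ _ => g δ)) (hcard γ hγ (fun δ _ => g δ))).choose_spec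
      _ ⟨⟨δ, hδγ⟩, rfl⟩
  exact hchain ⟨fun γ => (g γ : K), fun α β hαβ hβ => hmono α β hαβ hβ⟩

lemma isRegular_lift {lam : Cardinal.{0}} (hreg : lam.IsRegular) :
    (Cardinal.lift.{1} lam).IsRegular := by
  constructor
  · exact Cardinal.aleph0_le_lift.mpr hreg.1
  · rw [← Cardinal.lift_ord, ← Ordinal.lift_cof, hreg.cof_eq]

lemma small_cofinal_of_proj {L K : Type 1} [LinearOrder L] [LinearOrder K]
    {lam : Cardinal.{0}} (hreg : lam.IsRegular)
    (π : L → K) (hmono : ∀ x x' : L, π x < π x' → x < x')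
    (hfib : ∀ k : K, #{x : L // π x = k} < Cardinal.lift.{1} lam)
    (hK : ∀ P : Set K, ∃ C, C ⊆ P ∧ #C < Cardinal.lift.{1} lam ∧ ∀ p ∈ P, ∃ c ∈ C, p ≤ c)
    (X : Set L) :
    ∃ C, C ⊆ X ∧ #C < Cardinal.lift.{1} lam ∧ ∀ x ∈ X, ∃ c ∈ C, x ≤ c := by
  obtain ⟨CK, hCKsub, hCKcard, hCKcof⟩ := hK (π '' X)
  refine ⟨{x | x ∈ X ∧ π x ∈ CK}, fun x hx => hx.1, ?_, ?_⟩
  · have hsub : {x | x ∈ X ∧ π x ∈ CK} ⊆ ⋃ k ∈ CK, {x | π x = k} := by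
      rintro x ⟨-, hx⟩
      exact Set.mem_iUnion₂.mpr ⟨π x, hx, rfl⟩
    refine lt_of_le_of_lt (Cardinal.mk_le_mk_of_subset hsub) ?_
    refine lt_of_le_of_lt (Cardinal.mk_biUnion_le _ _) ?_
    refine Cardinal.mul_lt_of_lt (Cardinal.aleph0_le_lift.mpr hreg.1) hCKcard ?_
    refine Cardinal.iSup_lt_of_isRegular (isRegular_lift hreg) hCKcard ?_
    intro k
    exact hfib k.1
  · intro x hx
    obtain ⟨k, hkCK, hk⟩ := hCKcof (π x) ⟨x, hx, rfl⟩
    rcases eq_or_lt_of_le hk with heq | hlt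
    · exact ⟨x, ⟨hx, heq ▸ hkCK⟩, le_rfl⟩
    · obtain ⟨x', hx'X, hx'k⟩ := hCKsub hkCK
      refine ⟨x', ⟨hx'X, by rw [hx'k]; exact hkCK⟩, (hmono x x' ?_).le⟩
      rw [hx'k]; exact hlt

lemma small_coinitial_of_proj {L K : Type 1} [LinearOrder L] [LinearOrder K]
    {lam : Cardinal.{0}} (hreg : lam.IsRegular)
    (π : L → K) (hmono : ∀ x x' : L, π x < π x' → x < x')
    (hfib : ∀ k : K, #{x : L // π x = k} < Cardinal.lift.{1} lam)
    (hK : ∀ P : Set K, ∃ C, C ⊆ P ∧ #C < Cardinal.lift.{1} lam ∧ ∀ p ∈ P, ∃ c ∈ C, c ≤ p)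
    (X : Set L) :
    ∃ C, C ⊆ X ∧ #C < Cardinal.lift.{1} lam ∧ ∀ x ∈ X, ∃ c ∈ C, c ≤ x := by
  obtain ⟨CK, hCKsub, hCKcard, hCKcoi⟩ := hK (π '' X)
  refine ⟨{x | x ∈ X ∧ π x ∈ CK}, fun x hx => hx.1, ?_, ?_⟩
  · have hsub : {x | x ∈ X ∧ π x ∈ CK} ⊆ ⋃ k ∈ CK, {x | π x = k} := by
      rintro x ⟨-, hx⟩
      exact Set.mem_iUnion₂.mpr ⟨π x, hx, rfl⟩
    refine lt_of_le_of_lt (Cardinal.mk_le_mk_of_subset hsub) ?_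
    refine lt_of_le_of_lt (Cardinal.mk_biUnion_le _ _) ?_
    refine Cardinal.mul_lt_of_lt (Cardinal.aleph0_le_lift.mpr hreg.1) hCKcard ?_
    refine Cardinal.iSup_lt_of_isRegular (isRegular_lift hreg) hCKcard ?_
    intro k
    exact hfib k.1
  · intro x hx
    obtain ⟨k, hkCK, hk⟩ := hCKcoi (π x) ⟨x, hx, rfl⟩
    rcases eq_or_lt_of_le hk with heq | hlt
    · exact ⟨x, ⟨hx, heq ▸ hkCK⟩, le_rfl⟩
    · obtain ⟨x', hx'X, hx'k⟩ := hCKsub hkCK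
      refine ⟨x', ⟨hx'X, by rw [hx'k]; exact hkCK⟩, (hmono x' x ?_).le⟩
      rw [hx'k]; exact hlt

/-- Let `λ` be infinite regular and not the successor of a singular cardinal, and let
`(J,<_J)` be a linear order of size `λ` with no increasing or decreasing chain of
length `λ`.  Let `⟨y α : α < λ⟩` enumerate `J` injectively and let `L` be (a copy of)
the linear order `L(J) = {(y α, β) : α < λ, β < α}` ordered by
`(y α, β) < (y α', β') ↔ y α <_J y α' ∨ (y α = y α' ∧ β < β')`.  Then every
ultrafilter on `Int(L(J))` is generated by fewer than `λ` elements, i.e.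
`χ⁺(Int(L(J))) ≤ λ`. -/
theorem character_of_intAlg_LJ (lam : Cardinal.{0}) (J L : Type 1)
    [LinearOrder J] [LinearOrder L]
    (hreg : lam.IsRegular) (hinf : ℵ₀ ≤ lam)
    (hnotsucc : ¬ ∃ ν : Cardinal, ℵ₀ ≤ ν ∧ ¬ ν.IsRegular ∧ lam = Order.succ ν)
    (hcard : #J = Cardinal.lift.{1} lam)
    (hinc : ¬ ∃ f : Ordinal → J, ∀ α β, α < β → β < lam.ord → f α < f β)
    (hdec : ¬ ∃ f : Ordinal → J, ∀ α β, α < β → β < lam.ord → f β < f α)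
    (y : Ordinal → J)
    (hyinj : ∀ α < lam.ord, ∀ β < lam.ord, y α = y β → α = β)
    (hysurj : ∀ x : J, ∃ α < lam.ord, y α = x)
    (e : L ≃ {p : Ordinal × Ordinal // p.2 < p.1 ∧ p.1 < lam.ord})
    (he : ∀ l l' : L, l < l' ↔
      (y (e l).1.1 < y (e l').1.1 ∨ ((e l).1.1 = (e l').1.1 ∧ (e l).1.2 < (e l').1.2))) :
    ∀ U : Set (Set L), IsUltrafilterOn {s | InIntervalAlgebra L s} U →
      ∃ G : Set (Set L), GeneratesUF G U ∧ #G < Cardinal.lift.{1} lam := by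
  classical
  intro U hU
  have hA : ∀ a b : L, Set.Ico a b ∈ {s | InIntervalAlgebra L s} :=
    fun a b => InIntervalAlgebra.ico a b
  have hzero : (0 : Cardinal.{1}) < Cardinal.lift.{1} lam := by
    have : (0 : Cardinal.{0}) < lam := lt_of_lt_of_le aleph0_pos hinf
    simpa using Cardinal.lift_lt.{0,1}.mpr this
  set π : L → J := fun x => y (e x).1.1 with hπdef
  have hmono : ∀ x x' : L, π x < π x' → x < x' :=
    fun x x' h => (he x x').mpr (Or.inl h)
  have hfib : ∀ k : J, #{x : L // π x = k} < Cardinal.lift.{1} lam := by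
    intro k
    rcases isEmpty_or_nonempty {x : L // π x = k} with hk | ⟨⟨x0, hx0⟩⟩
    · rw [Cardinal.mk_eq_zero]; exact hzero
    · have hαord : (e x0).1.1 < lam.ord := (e x0).2.2
      have hfst : ∀ x : {x : L // π x = k}, (e x.1).1.1 = (e x0).1.1 :=
        fun x => hyinj _ (e x.1).2.2 _ hαord (x.2.trans hx0.symm)
      have hinj : Function.Injective
          (fun x : {x : L // π x = k} =>
            (⟨(e x.1).1.2, (hfst x) ▸ (e x.1).2.1⟩ : Set.Iio (e x0).1.1)) := by
        intro x x' hxx'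
        have hsnd : (e x.1).1.2 = (e x'.1).1.2 := congrArg Subtype.val hxx'
        have hp : (e x.1).1 = (e x'.1).1 :=
          Prod.ext ((hfst x).trans (hfst x').symm) hsnd
        have : e x.1 = e x'.1 := Subtype.ext hp
        exact Subtype.ext (e.injective this)
      refine lt_of_le_of_lt (Cardinal.mk_le_of_injective hinj) ?_
      rw [Ordinal.mk_Iio_ordinal]
      exact Cardinal.lift_lt.mpr (Cardinal.lt_ord.mp hαord)
  have hLcof : ∀ X : Set L, ∃ C, C ⊆ X ∧ #C < Cardinal.lift.{1} lam ∧
      ∀ x ∈ X, ∃ c ∈ C, x ≤ c :=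
    small_cofinal_of_proj hreg π hmono hfib
      (fun P => exists_small_cofinal hinf hinc P)
  have hLcoi : ∀ X : Set L, ∃ C, C ⊆ X ∧ #C < Cardinal.lift.{1} lam ∧
      ∀ x ∈ X, ∃ c ∈ C, c ≤ x :=
    small_coinitial_of_proj hreg π hmono hfib
      (fun P => exists_small_coinitial hinf hdec P)
  by_cases hcase : ∃ a b : L, Set.Ico a b ∈ U
  · -- Case 1 : some interval belongs to U
    obtain ⟨a, b, habU⟩ := hcase
    set S : Set L := {x | a ≤ x ∧ Set.Ico x b ∈ U} with hSdef
    set T : Set L := {z | a ≤ z ∧ z ≤ b ∧ Set.Ico z b ∉ U} with hTdef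
    obtain ⟨C, hCS, hCcard, hCcof⟩ := hLcof S
    obtain ⟨D, hDT, hDcard, hDcoi⟩ := hLcoi T
    refine ⟨Set.range (fun q : ↥C × ↥D => Set.Ico q.1.1 q.2.1), ⟨?_, ?_⟩, ?_⟩
    · rintro _ ⟨⟨c, d⟩, rfl⟩
      show Set.Ico (c : L) (d : L) ∈ U
      have hcS : (c : L) ∈ S := hCS c.2
      have hdT : (d : L) ∈ T := hDT d.2
      have h1 : (Set.Ico (d : L) b)ᶜ ∈ U :=
        (hU.2.2.2.2 _ (hA _ _)).resolve_left hdT.2.2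
      have h2 : Set.Ico (c : L) b ∩ (Set.Ico (d : L) b)ᶜ ∈ U :=
        hU.2.2.2.1 _ hcS.2 _ h1
      have h3 : Set.Ico (c : L) b ∩ (Set.Ico (d : L) b)ᶜ = Set.Ico (c : L) (d : L) := by
        ext x
        simp only [Set.mem_inter_iff, Set.mem_Ico, Set.mem_compl_iff, not_and, not_lt]
        constructor
        · rintro ⟨⟨hc, hb⟩, hnd⟩
          refine ⟨hc, ?_⟩
          by_contra hnx
          exact absurd (hnd (not_lt.mp hnx)) (not_le.mpr hb)
        · rintro ⟨hc, hd⟩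
          exact ⟨⟨hc, lt_of_lt_of_le hd hdT.2.1⟩,
            fun hdx => absurd hd (not_lt.mpr hdx)⟩
      rw [← h3]; exact h2
    · intro s hs
      have hw : s ∩ Set.Ico a b ∈ U := hU.2.2.2.1 _ hs _ habU
      have hwFU : FinUnionIco L (s ∩ Set.Ico a b) := by
        rcases algebra_FU (hU.1 hs) with h | h
        · exact FU_inter_Ico h a b
        · have heq : s ∩ Set.Ico a b = Set.Ico a b \ sᶜ := by
            rw [Set.diff_eq, compl_compl, Set.inter_comm]
          rw [heq]; exact FU_diff (FU_ico a b) h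
      obtain ⟨c0, d0, hcdU, hcdsub⟩ := uf_exists_Ico hU hA hw hwFU
      set c1 := a ⊔ c0 with hc1def
      set d1 := b ⊓ d0 with hd1def
      have hIeq : Set.Ico a b ∩ Set.Ico c0 d0 = Set.Ico c1 d1 := Set.Ico_inter_Ico
      have hI1U : Set.Ico c1 d1 ∈ U := hIeq ▸ hU.2.2.2.1 _ habU _ hcdU
      have hne : c1 < d1 := by
        rcases Set.eq_empty_or_nonempty (Set.Ico c1 d1) with hemp | hne
        · exact absurd (hemp ▸ hI1U) hU.2.1
        · exact Set.nonempty_Ico.mp hne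
      have hsub0 : Set.Ico c1 d1 ⊆ Set.Ico c0 d0 := by
        rw [← hIeq]; exact Set.inter_subset_right
      have hsub1 : Set.Ico c1 d1 ⊆ s := fun x hx => (hcdsub (hsub0 hx)).1
      have hc1S : c1 ∈ S := by
        refine ⟨le_sup_left, ?_⟩
        exact hU.2.2.1 _ hI1U _ (hA c1 b) (Set.Ico_subset_Ico le_rfl inf_le_left)
      have hd1T : d1 ∈ T := by
        refine ⟨le_trans le_sup_left hne.le, inf_le_left, ?_⟩
        intro hmem
        have h4 : Set.Ico d1 b ∩ Set.Ico c1 d1 = ∅ := by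
          apply Set.eq_empty_iff_forall_notMem.mpr
          rintro x ⟨⟨h5, -⟩, ⟨-, h6⟩⟩
          exact absurd h5 (not_le.mpr h6)
        exact hU.2.1 (h4 ▸ hU.2.2.2.1 _ hmem _ hI1U)
      obtain ⟨c, hcC, hc1c⟩ := hCcof c1 hc1S
      obtain ⟨d, hdD, hdd1⟩ := hDcoi d1 hd1T
      refine ⟨{Set.Ico c d}, ?_, ?_⟩
      · intro t ht
        simp only [Finset.coe_singleton, Set.mem_singleton_iff] at ht
        exact ht ▸ ⟨(⟨c, hcC⟩, ⟨d, hdD⟩), rfl⟩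
      · rw [Finset.coe_singleton, Set.sInter_singleton]
        exact (Set.Ico_subset_Ico hc1c hdd1).trans hsub1
    · refine lt_of_le_of_lt Cardinal.mk_range_le ?_
      rw [Cardinal.mk_prod]
      simp only [Cardinal.lift_id]
      exact Cardinal.mul_lt_of_lt (Cardinal.aleph0_le_lift.mpr hinf) hCcard hDcard
  · -- Case 2 : no interval belongs to U
    push_neg at hcase
    obtain ⟨Ccof, hCsub, hC2, hC3⟩ := hLcof Set.univ
    obtain ⟨Dcoi, hDsub, hD2, hD3⟩ := hLcoi Set.univ
    refine ⟨Set.range (fun q : ↥Dcoi × ↥Ccof => (Set.Ico q.1.1 q.2.1)ᶜ), ⟨?_, ?_⟩, ?_⟩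
    · rintro _ ⟨⟨c, d⟩, rfl⟩
      exact (hU.2.2.2.2 _ (hA c.1 d.1)).resolve_left (hcase c.1 d.1)
    · intro s hs
      rcases algebra_FU (hU.1 hs) with hFU | hFU
      · obtain ⟨a, b, habU, -⟩ := uf_exists_Ico hU hA hs hFU
        exact absurd habU (hcase a b)
      · obtain ⟨F, hF⟩ := hFU
        choose c hc1 hc2 using fun p : L × L => hD3 p.1 (Set.mem_univ _)
        choose d hd1 hd2 using fun p : L × L => hC3 p.2 (Set.mem_univ _)
        refine ⟨F.image (fun p => (Set.Ico (c p) (d p))ᶜ), ?_, ?_⟩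
        · intro t ht
          simp only [Finset.coe_image, Set.mem_image, Finset.mem_coe] at ht
          obtain ⟨p, hp, rfl⟩ := ht
          exact ⟨(⟨c p, hc1 p⟩, ⟨d p, hd1 p⟩), rfl⟩
        · intro x hx
          have hxs : x ∉ sᶜ := by
            rw [hF]
            intro hmem
            obtain ⟨p, hp, hxp⟩ := Set.mem_iUnion₂.mp hmem
            have hx' : x ∈ (Set.Ico (c p) (d p))ᶜ := by
              refine hx _ ?_
              simp only [Finset.coe_image, Set.mem_image, Finset.mem_coe]
              exact ⟨p, hp, rfl⟩
            exact hx' ⟨le_trans (hc2 p) hxp.1, lt_of_lt_of_le hxp.2 (hd2 p)⟩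
          by_contra hxns
          exact hxs hxns
    · refine lt_of_le_of_lt Cardinal.mk_range_le ?_
      rw [Cardinal.mk_prod]
      simp only [Cardinal.lift_id]
      exact Cardinal.mul_lt_of_lt (Cardinal.aleph0_le_lift.mpr hinf) hD2 hC2
end

section
/- Let (J,<_J) be a linear order enumerated injectively as ⟨y_α : α < λ⟩, and let σ < λ be a regular infinite cardinal with σ + 1 < λ. Let U be the ultrafilter on Int(L(J)) generated by the intervals [(y_{σ+1},α), (y_{σ+1},σ)) for α < σ. Then every subset Y of Int(L(J)) \ {0} that is dense in U (i.e., every element of U contains a member of Y) has cardinality at least σ. Hence π-character πχ(U) ≥ σ. -/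
/-!
Every point of a generating interval `[(y (σ+1), α), (y (σ+1), σ))` has second coordinate in
`[α, σ)`. Choosing one point in each member of a dense family `Y` therefore yields ordinals below
`σ` that are unbounded in `σ`, so `#Y ≥ cof σ = σ` by regularity.
-/

open Cardinal Set

universe u v

theorem Ordinal.lift_cof_le_of_forall_exists_mem_Ico {ι : Type v} (f : ι → Ordinal.{u})
    (o : Ordinal.{u}) (hf : ∀ α < o, ∃ i, f i ∈ Ico α o) :
    Cardinal.lift.{v} o.cof ≤ Cardinal.lift.{u} #ι := by
  by_contra! hcard
  let g : {i // f i < o} → Ordinal := fun i ↦ f i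
  have hsup : ⨆ i, g i + 1 < o := by
    refine lift_iSup_add_one_lt_of_lt_cof ?_ fun i ↦ i.2
    rw [← lift_cof]
    exact (Cardinal.lift_le.2 (mk_subtype_le _)).trans_lt hcard
  obtain ⟨i, hle, hlt⟩ := hf _ hsup
  have hbdd : BddAbove (range fun j ↦ g j + 1) := ⟨o, by
    rintro _ ⟨j, rfl⟩
    exact Order.add_one_le_of_lt j.2⟩
  have hi : f i + 1 ≤ ⨆ j, g j + 1 := le_ciSup hbdd ⟨i, hlt⟩
  exact (hi.trans hle).not_gt (lt_add_one (f i))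

theorem mapsTo_Ico_of_lex {L A B J : Type*} [LinearOrder L] [Preorder J] [Preorder B]
    (c : L → A) (y : A → J) (d : L → B)
    (hlex : ∀ l l', l < l' ↔ y (c l) < y (c l') ∨ (c l = c l' ∧ d l < d l'))
    {a b : L} (hab : c a = c b) : MapsTo d (Ico a b) (Ico (d a) (d b)) := by
  rintro l ⟨hal, hlb⟩
  have hlb' := (hlex l b).1 hlb
  rcases hal.eq_or_lt with rfl | hal
  · refine ⟨le_rfl, ?_⟩
    rcases hlb' with h | h
    · exact absurd h (hab ▸ lt_irrefl _)
    · exact h.2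
  · rcases (hlex a l).1 hal, hlb' with ⟨h₁ | h₁, h₂ | h₂⟩
    · exact absurd (h₁.trans h₂) (hab ▸ lt_irrefl _)
    · exact absurd h₁ (by rw [h₂.1, hab]; exact lt_irrefl _)
    · exact absurd h₂ (by rw [← h₁.1, hab]; exact lt_irrefl _)
    · exact ⟨h₁.2.le, h₂.2⟩

theorem pi_character_lower_bound_general (lam σ : Cardinal.{0}) (J L : Type 1)
    [LinearOrder J] [LinearOrder L]
    (hσreg : σ.IsRegular) (hσlam : σ.ord + 1 < lam.ord)
    (y : Ordinal → J)
    (e : L ≃ {p : Ordinal × Ordinal // p.2 < p.1 ∧ p.1 < lam.ord})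
    (he : ∀ l l' : L, l < l' ↔
      (y (e l).1.1 < y (e l').1.1 ∨ ((e l).1.1 = (e l').1.1 ∧ (e l).1.2 < (e l').1.2)))
    (hσsucc : σ.ord < σ.ord + 1)
    (U : Set (Set L))
    (hUgen : ∀ s : Set L, s ∈ U ↔ (InIntervalAlgebra L s ∧ ∃ α, ∃ hα : α < σ.ord,
      Set.Ico (e.symm ⟨(σ.ord + 1, α), hα.trans hσsucc, hσlam⟩)
              (e.symm ⟨(σ.ord + 1, σ.ord), hσsucc, hσlam⟩) ⊆ s)) :
    ∀ Y : Set (Set L), (∀ s ∈ Y, InIntervalAlgebra L s ∧ s ≠ ∅) →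
      (∀ u ∈ U, ∃ s ∈ Y, s ⊆ u) → Cardinal.lift.{1} σ ≤ #Y := by
  intro Y hY hdense
  have hpoint : ∀ s : Y, (s : Set L).Nonempty := fun s ↦ nonempty_iff_ne_empty.2 (hY s s.2).2
  choose p hp using hpoint
  have hcofinal : ∀ α < σ.ord, ∃ s : Y, (e (p s)).1.2 ∈ Ico α σ.ord := by
    intro α hα
    obtain ⟨s, hsY, hsub⟩ := hdense _ ((hUgen _).2 ⟨InIntervalAlgebra.ico _ _, α, hα, subset_rfl⟩)
    have hmaps := mapsTo_Ico_of_lex (fun l ↦ (e l).1.1) y (fun l ↦ (e l).1.2) he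
      (a := e.symm ⟨(σ.ord + 1, α), hα.trans hσsucc, hσlam⟩)
      (b := e.symm ⟨(σ.ord + 1, σ.ord), hσsucc, hσlam⟩) (by simp)
    exact ⟨⟨s, hsY⟩, by simpa using hmaps (hsub (hp ⟨s, hsY⟩))⟩
  calc Cardinal.lift.{1} σ = Cardinal.lift.{1} σ.ord.cof := by rw [hσreg.cof_ord]
    _ ≤ Cardinal.lift.{0} #Y := Ordinal.lift_cof_le_of_forall_exists_mem_Ico _ _ hcofinal
    _ = #Y := lift_uzero _

/-- Let `J` be enumerated injectively by `⟨y α : α < λ⟩`, let `L` be (a copy of)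
`L(J)`, and let `σ < λ` be regular infinite with `σ + 1 < λ`.  Let `U` be the
ultrafilter on `Int(L(J))` generated by the intervals
`[(y (σ+1), α), (y (σ+1), σ))` for `α < σ`.  Then every `Y ⊆ Int(L(J)) \ {∅}` that
is dense in `U` has cardinality at least `σ`; hence `πχ(U) ≥ σ`. -/
theorem pi_character_lower_bound (lam σ : Cardinal.{0}) (J L : Type 1)
    [LinearOrder J] [LinearOrder L]
    (hσreg : σ.IsRegular) (hσinf : ℵ₀ ≤ σ) (hσlam : σ.ord + 1 < lam.ord)
    (y : Ordinal → J)
    (hyinj : ∀ α < lam.ord, ∀ β < lam.ord, y α = y β → α = β)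
    (hysurj : ∀ x : J, ∃ α < lam.ord, y α = x)
    (e : L ≃ {p : Ordinal × Ordinal // p.2 < p.1 ∧ p.1 < lam.ord})
    (he : ∀ l l' : L, l < l' ↔
      (y (e l).1.1 < y (e l').1.1 ∨ ((e l).1.1 = (e l').1.1 ∧ (e l).1.2 < (e l').1.2)))
    (hσsucc : σ.ord < σ.ord + 1)
    (U : Set (Set L))
    (hU : IsUltrafilterOn {s | InIntervalAlgebra L s} U)
    (hUgen : ∀ s : Set L, s ∈ U ↔ (InIntervalAlgebra L s ∧ ∃ α, ∃ hα : α < σ.ord,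
      Set.Ico (e.symm ⟨(σ.ord + 1, α), hα.trans hσsucc, hσlam⟩)
              (e.symm ⟨(σ.ord + 1, σ.ord), hσsucc, hσlam⟩) ⊆ s)) :
    ∀ Y : Set (Set L), (∀ s ∈ Y, InIntervalAlgebra L s ∧ s ≠ ∅) →
      (∀ u ∈ U, ∃ s ∈ Y, s ⊆ u) → Cardinal.lift.{1} σ ≤ #Y :=
  pi_character_lower_bound_general lam σ J L hσreg hσlam y e he hσsucc U hUgen
end
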